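/- Let A be an n-dimensional nil evolution algebra over a field F of characteristic ≠ 2 with natural basis e_1, …, e_n. Then A is a Jordan algebra (i.e. (x²·y)·x = x²·(y·x) for all x, y ∈ A) if and only if: (1) (e_i·e_i)·(e_j·e_j) = 0 for all 1 ≤ i ≤ j ≤ n; and (2) ((e_i·e_i)·e_j)·e_k = 0 for all 1 ≤ i, j, k ≤ n. -/

import Mathlib

/-!
Write `sᵢ = eᵢ·eᵢ`; since `eᵢ·eⱼ = 0` for `i ≠ j`, every product `x·y` is a combination of the
`sᵢ`, and `v·eⱼ` is a multiple of `sⱼ`. In particular `sᵢ·eᵢ = c·sᵢ`, so the principal powers of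
`eᵢ` are `cᵏ·sᵢ`, and nilpotency forces `sᵢ·eᵢ = 0`.

If `A` is Jordan, linearizing the Jordan identity at `eᵢ ± eⱼ` and dividing by 2 gives
`(sᵢ·y)·eⱼ = sᵢ·(y·eⱼ)`; taking `y = eⱼ` yields `sᵢ·sⱼ = (c·sⱼ)·eⱼ = 0`, and then
`(sᵢ·eⱼ)·e_k = sᵢ·(eⱼ·e_k)` vanishes as well. Conversely, the two conditions say that
`(A²·A)·A = 0` and `A²·A² = 0`, so both sides of the Jordan identity vanish.
-/

/-- Principal powers: `ppow m a k = a^(k+1)`. -/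
def ppow {F A : Type*} [Field F] [AddCommGroup A] [Module F A]
    (m : A →ₗ[F] A →ₗ[F] A) (a : A) : ℕ → A
  | 0 => a
  | k + 1 => m (ppow m a k) a

section

variable {F A : Type*} [Field F] [AddCommGroup A] [Module F A] (m : A →ₗ[F] A →ₗ[F] A)

theorem ppow_succ_eq_pow_smul {a : A} {c : F} (h : m (m a a) a = c • m a a) (k : ℕ) :
    ppow m a (k + 1) = c ^ k • m a a := by
  induction k with
  | zero => simp [ppow]
  | succ k ih =>
    rw [ppow, ih, map_smul, LinearMap.smul_apply, h, smul_smul, ← pow_succ]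

theorem sq_mul_self_eq_zero_of_eq_smul {a : A} {c : F} (h : m (m a a) a = c • m a a)
    (hnil : ∃ k, ppow m a k = 0) : m (m a a) a = 0 := by
  obtain ⟨_ | k, hk⟩ := hnil
  · simp [show a = 0 from hk]
  · rw [ppow_succ_eq_pow_smul m h] at hk
    rcases smul_eq_zero.mp hk with hc | hsq
    · rw [h, pow_eq_zero_iff'.mp hc |>.1, zero_smul]
    · simp [hsq]

theorem sq_mul_mul_eq_of_jordan (h2 : (2 : F) ≠ 0)
    (hJ : ∀ x y : A, m (m (m x x) y) x = m (m x x) (m y x))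
    {a b : A} (hab : m a b = 0) (hba : m b a = 0) (y : A) :
    m (m (m a a) y) b = m (m a a) (m y b) := by
  have hplus := hJ (a + b) y
  have hminus := hJ (a - b) y
  have hb := hJ b y
  simp only [map_add, map_sub, LinearMap.add_apply, LinearMap.sub_apply, hab, hba, map_zero,
    LinearMap.zero_apply, add_zero, sub_zero, zero_sub, map_neg, LinearMap.neg_apply]
    at hplus hminus
  refine smul_right_injective A h2 ?_
  linear_combination (norm := module) hplus - hminus - (2 : F) • hb

def IsNaturalBasis {ι : Type*} (e : Module.Basis ι F A) : Prop :=
  ∀ i j, i ≠ j → m (e i) (e j) = 0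

namespace IsNaturalBasis

variable {m} {ι : Type*} {e : Module.Basis ι F A}

theorem flip (he : IsNaturalBasis m e) : IsNaturalBasis m.flip e :=
  fun i j hij => he j i hij.symm

theorem mul_basis (he : IsNaturalBasis m e) (v : A) (j : ι) :
    m v (e j) = e.repr v j • m (e j) (e j) := by
  have hflip : m.flip (e j) = (e.coord j).smulRight (m (e j) (e j)) := e.ext fun i => by
    rcases eq_or_ne i j with rfl | hij
    · simp
    · simp [he i j hij, hij]
  exact LinearMap.congr_fun hflip v

theorem basis_mul (he : IsNaturalBasis m e) (i : ι) (v : A) :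
    m (e i) v = e.repr v i • m (e i) (e i) :=
  he.flip.mul_basis v i

theorem mul_eq_sum [Fintype ι] (he : IsNaturalBasis m e) (x y : A) :
    m x y = ∑ i, (e.repr x i * e.repr y i) • m (e i) (e i) := by
  conv_lhs => rw [← e.sum_repr x]
  simp only [map_sum, map_smul, LinearMap.sum_apply, LinearMap.smul_apply]
  exact Finset.sum_congr rfl fun i _ => by rw [he.basis_mul i y, smul_smul]

theorem sq_mul_self_eq_zero (he : IsNaturalBasis m e) (hnil : ∀ a : A, ∃ k, ppow m a k = 0)
    (i : ι) : m (m (e i) (e i)) (e i) = 0 :=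
  sq_mul_self_eq_zero_of_eq_smul m (he.mul_basis _ i) (hnil (e i))

theorem sq_mul_mul_basis_eq_of_jordan (he : IsNaturalBasis m e) (h2 : (2 : F) ≠ 0)
    (hJ : ∀ x y : A, m (m (m x x) y) x = m (m x x) (m y x)) (i j : ι) (y : A) :
    m (m (m (e i) (e i)) y) (e j) = m (m (e i) (e i)) (m y (e j)) := by
  rcases eq_or_ne i j with rfl | hij
  · exact hJ (e i) y
  · exact sq_mul_mul_eq_of_jordan m h2 hJ (he i j hij) (he j i hij.symm) y

theorem sq_mul_sq_eq_zero_of_jordan (he : IsNaturalBasis m e) (h2 : (2 : F) ≠ 0)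
    (hnil : ∀ a : A, ∃ k, ppow m a k = 0)
    (hJ : ∀ x y : A, m (m (m x x) y) x = m (m x x) (m y x)) (i j : ι) :
    m (m (e i) (e i)) (m (e j) (e j)) = 0 := by
  rw [← he.sq_mul_mul_basis_eq_of_jordan h2 hJ i j (e j), he.mul_basis (m (e i) (e i)) j,
    map_smul, LinearMap.smul_apply, he.sq_mul_self_eq_zero hnil j, smul_zero]

theorem sq_mul_basis_mul_basis_eq_zero_of_jordan (he : IsNaturalBasis m e) (h2 : (2 : F) ≠ 0)
    (hnil : ∀ a : A, ∃ k, ppow m a k = 0)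
    (hJ : ∀ x y : A, m (m (m x x) y) x = m (m x x) (m y x)) (i j k : ι) :
    m (m (m (e i) (e i)) (e j)) (e k) = 0 := by
  rw [he.sq_mul_mul_basis_eq_of_jordan h2 hJ i k (e j)]
  rcases eq_or_ne j k with rfl | hjk
  · exact he.sq_mul_sq_eq_zero_of_jordan h2 hnil hJ i j
  · rw [he j k hjk, map_zero]

variable [Fintype ι]

theorem mul_mul_mul_eq_zero_of_sq_mul_sq (he : IsNaturalBasis m e)
    (hsq : ∀ i j, m (m (e i) (e i)) (m (e j) (e j)) = 0) (w x y z : A) :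
    m (m w x) (m y z) = 0 := by
  simp [he.mul_eq_sum w x, he.mul_eq_sum y z, hsq]

theorem mul_mul_mul_eq_zero_of_sq_mul_mul (he : IsNaturalBasis m e)
    (hprod : ∀ i j k, m (m (m (e i) (e i)) (e j)) (e k) = 0) (w x y z : A) :
    m (m (m w x) y) z = 0 := by
  have hsq (i : ι) (y z : A) : m (m (m (e i) (e i)) y) z = 0 :=
    LinearMap.congr_fun₂
      (LinearMap.ext_basis e e (B := m.comp (m (m (e i) (e i)))) (B' := 0) (hprod i)) y z
  simp [he.mul_eq_sum w x, hsq]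

end IsNaturalBasis

end

/-- a nil evolution algebra over a field of characteristic ≠ 2 satisfies the
Jordan identity iff `(eᵢ·eᵢ)·(eⱼ·eⱼ) = 0` for all `i ≤ j` and
`((eᵢ·eᵢ)·eⱼ)·e_k = 0` for all `i, j, k`. -/
theorem nil_evolution_algebra_jordan_iff
    (F : Type*) [Field F] (h2 : (2 : F) ≠ 0)
    (A : Type*) [AddCommGroup A] [Module F A]
    (m : A →ₗ[F] A →ₗ[F] A) (hcomm : ∀ x y : A, m x y = m y x)
    (n : ℕ) (e : Module.Basis (Fin n) F A)
    (hnat : ∀ i j : Fin n, i ≠ j → m (e i) (e j) = 0)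
    (hnil : ∀ a : A, ∃ k : ℕ, ppow m a k = 0) :
    (∀ x y : A, m (m (m x x) y) x = m (m x x) (m y x)) ↔
      ((∀ i j : Fin n, i ≤ j → m (m (e i) (e i)) (m (e j) (e j)) = 0) ∧
       (∀ i j k : Fin n, m (m (m (e i) (e i)) (e j)) (e k) = 0)) := by
  have he : IsNaturalBasis m e := hnat
  refine ⟨fun hJ => ⟨fun i j _ => he.sq_mul_sq_eq_zero_of_jordan h2 hnil hJ i j,
    he.sq_mul_basis_mul_basis_eq_zero_of_jordan h2 hnil hJ⟩, fun ⟨hle, hassoc⟩ x y => ?_⟩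
  have hsq (i j : Fin n) : m (m (e i) (e i)) (m (e j) (e j)) = 0 := by
    rcases le_total i j with hij | hji
    · exact hle i j hij
    · rw [hcomm]
      exact hle j i hji
  rw [he.mul_mul_mul_eq_zero_of_sq_mul_mul hassoc, he.mul_mul_mul_eq_zero_of_sq_mul_sq hsq]
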